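/- For every k ∈ ℕ there exist smooth bounded functions c̃^k_{0,φ}, …, c̃^k_{k,φ} : (0,∞) → ℝ with c̃^k_{k,φ} ≡ 1 such that for every smooth function f on Ω one has ∂_z Z₃^k f = Σ_{j=0}^{k} c̃^k_{j,φ}(z) Z₃^j ∂_z f = Z₃^k ∂_z f + Σ_{j=0}^{k-1} c̃^k_{j,φ}(z) Z₃^j ∂_z f. -/

import Mathlib

open MeasureTheory Set Filter
open scoped ENNReal

noncomputable section

/-- The half-space `Ω = ℝ² × (0,∞)` with coordinates `(x₁, x₂, z)`. -/
def Omega : Set (ℝ × ℝ × ℝ) := {x | 0 < x.2.2}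

/-- The closed half-space `ℝ² × [0,∞)`. -/
def ClosedOmega : Set (ℝ × ℝ × ℝ) := {x | 0 ≤ x.2.2}

/-- `φ(z) = z / (1 + z)`. -/
def phi (z : ℝ) : ℝ := z / (1 + z)

/-- Coordinate directions in `ℝ × ℝ × ℝ`. -/
def dir : Fin 3 → ℝ × ℝ × ℝ := ![((1:ℝ),(0:ℝ),(0:ℝ)), (0,1,0), (0,0,1)]

/-- Partial derivative in the `i`-th coordinate direction. -/
def pd (i : Fin 3) (f : ℝ × ℝ × ℝ → ℝ) (x : ℝ × ℝ × ℝ) : ℝ :=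
  fderiv ℝ f x (dir i)

/-- The conormal vector fields: `Z₁ = ∂₁`, `Z₂ = ∂₂`, `Z₃ = φ(z) ∂_z`. -/
def Z (i : Fin 3) (f : ℝ × ℝ × ℝ → ℝ) (x : ℝ × ℝ × ℝ) : ℝ :=
  if i = 2 then phi x.2.2 * pd 2 f x else pd i f x

/-- `Z^α = Z₁^{α₁} Z₂^{α₂} Z₃^{α₃}` for a multi-index `α = (α₁, α₂, α₃)`. -/
def Zmulti (α : ℕ × ℕ × ℕ) (f : ℝ × ℝ × ℝ → ℝ) : ℝ × ℝ × ℝ → ℝ :=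
  (Z 0)^[α.1] ((Z 1)^[α.2.1] ((Z 2)^[α.2.2] f))

/-- Multi-indices of total order at most `m`. -/
def idxLe (m : ℕ) : Finset (ℕ × ℕ × ℕ) :=
  (Finset.range (m+1) ×ˢ Finset.range (m+1) ×ˢ Finset.range (m+1)).filter
    (fun α => α.1 + α.2.1 + α.2.2 ≤ m)

/-- Lebesgue measure restricted to the half-space. -/
def muOmega : Measure (ℝ × ℝ × ℝ) := volume.restrict Omega

/-- The real-valued `L^q(Ω)` norm. -/
def lpOmega (q : ℝ≥0∞) (f : ℝ × ℝ × ℝ → ℝ) : ℝ := (eLpNorm f q muOmega).toReal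

/-- Membership in the conormal space `H^m_co(Ω)` (scalar functions). -/
def MemHco (m : ℕ) (f : ℝ × ℝ × ℝ → ℝ) : Prop :=
  ∀ α ∈ idxLe m, MemLp (Zmulti α f) 2 muOmega

/-- Membership in the conormal space `W^{m,∞}_co(Ω)` (scalar functions). -/
def MemWcoInf (m : ℕ) (f : ℝ × ℝ × ℝ → ℝ) : Prop :=
  ∀ α ∈ idxLe m, MemLp (Zmulti α f) ⊤ muOmega

/-- Square of the `H^m_co` norm: `‖f‖_m² = Σ_{|α| ≤ m} ‖Z^α f‖_{L²}²`. -/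
def HcoNormSq (m : ℕ) (f : ℝ × ℝ × ℝ → ℝ) : ℝ :=
  ∑ α ∈ idxLe m, (lpOmega 2 (Zmulti α f))^2

/-- The `W^{m,∞}_co` norm: `‖f‖_{m,∞} = Σ_{|α| ≤ m} ‖Z^α f‖_{L^∞}`. -/
def WcoNorm (m : ℕ) (f : ℝ × ℝ × ℝ → ℝ) : ℝ :=
  ∑ α ∈ idxLe m, lpOmega ⊤ (Zmulti α f)

/-- The `W^{k,p}_co` norm: `Σ_{|α| ≤ k} ‖Z^α f‖_{L^p}`. -/
def WkpCoNorm (k : ℕ) (q : ℝ≥0∞) (f : ℝ × ℝ × ℝ → ℝ) : ℝ :=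
  ∑ α ∈ idxLe k, lpOmega q (Zmulti α f)

/-- The `i`-th component of a vector field as a scalar function. -/
def vcomp (u : ℝ × ℝ × ℝ → Fin 3 → ℝ) (i : Fin 3) : ℝ × ℝ × ℝ → ℝ := fun x => u x i

def VMemHco (m : ℕ) (u : ℝ × ℝ × ℝ → Fin 3 → ℝ) : Prop := ∀ i, MemHco m (vcomp u i)

def VMemWcoInf (m : ℕ) (u : ℝ × ℝ × ℝ → Fin 3 → ℝ) : Prop := ∀ i, MemWcoInf m (vcomp u i)

/-- `‖u‖_m²` for a vector field (componentwise). -/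
def VHcoNormSq (m : ℕ) (u : ℝ × ℝ × ℝ → Fin 3 → ℝ) : ℝ :=
  ∑ i : Fin 3, HcoNormSq m (vcomp u i)

/-- `‖u‖_m` for a vector field. -/
def VHcoNorm (m : ℕ) (u : ℝ × ℝ × ℝ → Fin 3 → ℝ) : ℝ := Real.sqrt (VHcoNormSq m u)

/-- `‖u‖_{m,∞}` for a vector field (componentwise). -/
def VWcoNorm (m : ℕ) (u : ℝ × ℝ × ℝ → Fin 3 → ℝ) : ℝ :=
  ∑ i : Fin 3, WcoNorm m (vcomp u i)

/-- `‖∇u‖_{L^∞(Ω)}`, componentwise. -/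
def GradLinf (u : ℝ × ℝ × ℝ → Fin 3 → ℝ) : ℝ :=
  ∑ i : Fin 3, ∑ j : Fin 3, lpOmega ⊤ (pd j (vcomp u i))

/-- `‖u‖_{L^∞(Ω)}`, componentwise. -/
def VLinf (u : ℝ × ℝ × ℝ → Fin 3 → ℝ) : ℝ := ∑ i : Fin 3, lpOmega ⊤ (vcomp u i)

/-- The `W^{1,∞}(Ω)` norm of a vector field. -/
def W1infNorm (u : ℝ × ℝ × ℝ → Fin 3 → ℝ) : ℝ := VLinf u + GradLinf u

/-- `∇u ∈ L^∞(Ω)`. -/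
def MemGradLinf (u : ℝ × ℝ × ℝ → Fin 3 → ℝ) : Prop :=
  ∀ i j : Fin 3, MemLp (pd j (vcomp u i)) ⊤ muOmega

/-- `u ∈ W^{1,∞}(Ω)`. -/
def VMemW1inf (u : ℝ × ℝ × ℝ → Fin 3 → ℝ) : Prop :=
  (∀ i, MemLp (vcomp u i) ⊤ muOmega) ∧ MemGradLinf u

/-- The `L²(Ω)` norm of a vector field. -/
def VL2Norm (u : ℝ × ℝ × ℝ → Fin 3 → ℝ) : ℝ :=
  Real.sqrt (∑ i : Fin 3, (lpOmega 2 (vcomp u i))^2)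

/-- Divergence-free in `Ω`. -/
def DivFree (u : ℝ × ℝ × ℝ → Fin 3 → ℝ) : Prop :=
  ∀ x ∈ Omega, ∑ i : Fin 3, pd i (vcomp u i) x = 0

/-- The slip boundary condition `u₃ = 0` on `{z = 0}`. -/
def SlipBC (u : ℝ × ℝ × ℝ → Fin 3 → ℝ) : Prop :=
  ∀ x₁ x₂ : ℝ, u (x₁, x₂, (0:ℝ)) 2 = 0

/-- `‖∇p‖_m²` (componentwise). -/
def GradHcoNormSq (m : ℕ) (p : ℝ × ℝ × ℝ → ℝ) : ℝ :=
  ∑ i : Fin 3, HcoNormSq m (pd i p)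

/-- `‖∇p‖_m`. -/
def GradHcoNorm (m : ℕ) (p : ℝ × ℝ × ℝ → ℝ) : ℝ := Real.sqrt (GradHcoNormSq m p)

/-- `‖D²p‖_m`, where `D²p` is the full Hessian matrix (componentwise). -/
def D2HcoNorm (m : ℕ) (p : ℝ × ℝ × ℝ → ℝ) : ℝ :=
  Real.sqrt (∑ i : Fin 3, ∑ j : Fin 3, HcoNormSq m (pd i (pd j p)))

/-- `‖∇g‖_{L²(Ω)}`. -/
def GradL2 (g : ℝ × ℝ × ℝ → ℝ) : ℝ :=
  Real.sqrt (∑ i : Fin 3, (lpOmega 2 (pd i g))^2)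

/-- `‖D²g‖_{L²(Ω)}`. -/
def D2L2 (g : ℝ × ℝ × ℝ → ℝ) : ℝ :=
  Real.sqrt (∑ i : Fin 3, ∑ j : Fin 3, (lpOmega 2 (pd i (pd j g)))^2)

/-- The curl (vorticity) of a vector field. -/
def curlOf (u : ℝ × ℝ × ℝ → Fin 3 → ℝ) (x : ℝ × ℝ × ℝ) : Fin 3 → ℝ :=
  ![pd 1 (vcomp u 2) x - pd 2 (vcomp u 1) x,
    pd 2 (vcomp u 0) x - pd 0 (vcomp u 2) x,
    pd 0 (vcomp u 1) x - pd 1 (vcomp u 0) x]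

/-- `(u, p)` solves the incompressible Euler equations on `Ω × (0,T)`
with the slip boundary condition. -/
def IsEulerSolution (T : ℝ) (u : ℝ → ℝ × ℝ × ℝ → Fin 3 → ℝ)
    (p : ℝ → ℝ × ℝ × ℝ → ℝ) : Prop :=
  (∀ t ∈ Ioo (0:ℝ) T, ∀ x ∈ Omega, ∀ i : Fin 3,
      deriv (fun s => u s x i) t
        + (∑ j : Fin 3, u t x j * pd j (vcomp (u t) i) x)
        + pd i (p t) x = 0) ∧
  (∀ t ∈ Ioo (0:ℝ) T, DivFree (u t)) ∧
  (∀ t ∈ Ioo (0:ℝ) T, SlipBC (u t))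

/-- The `H⁵(Ω)` norm (via iterated derivatives). -/
def H5Norm (f : ℝ × ℝ × ℝ → ℝ) : ℝ :=
  ∑ k ∈ Finset.range 6, (eLpNorm (fun x => ‖iteratedFDeriv ℝ k f x‖) 2 muOmega).toReal

/-- Membership in `H⁵(Ω)`. -/
def MemH5 (f : ℝ × ℝ × ℝ → ℝ) : Prop :=
  ∀ k ∈ Finset.range 6, MemLp (fun x => ‖iteratedFDeriv ℝ k f x‖) 2 muOmega

/-- `u ∈ C([0,T]; H⁵(Ω))`. -/
def ContInH5 (T : ℝ) (u : ℝ → ℝ × ℝ × ℝ → Fin 3 → ℝ) : Prop :=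
  (∀ t ∈ Icc (0:ℝ) T, ∀ i : Fin 3, MemH5 (vcomp (u t) i)) ∧
  ∀ t ∈ Icc (0:ℝ) T,
    Tendsto (fun s => ∑ i : Fin 3, H5Norm (fun x => u s x i - u t x i))
      (nhdsWithin t (Icc 0 T)) (nhds 0)

lemma poly_contDiff (P : Polynomial ℝ) : ContDiff ℝ (⊤ : ℕ∞) (fun x : ℝ => P.eval x) := by
  induction P using Polynomial.induction_on' with
  | add p q hp hq => simpa using hp.add hq
  | monomial n a => simpa [Polynomial.eval_monomial] using contDiff_const.mul (contDiff_id.pow n)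

lemma omega_open : IsOpen Omega := isOpen_lt continuous_const (by fun_prop)

noncomputable def pr3 : ℝ×ℝ×ℝ →L[ℝ] ℝ :=
  (ContinuousLinearMap.snd ℝ ℝ ℝ).comp (ContinuousLinearMap.snd ℝ ℝ (ℝ×ℝ))

lemma hasFDerivAt_comp_proj (h : ℝ → ℝ) {d : ℝ} (x : ℝ×ℝ×ℝ) (hd : HasDerivAt h d x.2.2) :
    HasFDerivAt (fun y : ℝ×ℝ×ℝ => h y.2.2) (((1:ℝ→L[ℝ]ℝ).smulRight d).comp pr3) x :=
  (hd.hasFDerivAt).comp x pr3.hasFDerivAt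

lemma pd2_comp_proj (h : ℝ → ℝ) {d : ℝ} (x : ℝ×ℝ×ℝ) (hd : HasDerivAt h d x.2.2) :
    pd 2 (fun y => h y.2.2) x = d := by
  rw [pd, (hasFDerivAt_comp_proj h x hd).fderiv]
  show (1:ℝ→L[ℝ]ℝ).smulRight d (pr3 (dir 2)) = d
  have : pr3 (dir 2) = 1 := rfl
  rw [this]; simp

lemma pd2_congr {g h : ℝ×ℝ×ℝ → ℝ} {x} (hx : x ∈ Omega) (hgh : ∀ y ∈ Omega, g y = h y) :
    pd 2 g x = pd 2 h x := by
  have he : g =ᶠ[nhds x] h := by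
    filter_upwards [omega_open.mem_nhds hx] with y hy using hgh y hy
  simp only [pd, he.fderiv_eq]

lemma pd2_mul {g h : ℝ×ℝ×ℝ → ℝ} {x} (hg : DifferentiableAt ℝ g x)
    (hh : DifferentiableAt ℝ h x) :
    pd 2 (fun y => g y * h y) x = pd 2 g x * h x + g x * pd 2 h x := by
  unfold pd; rw [fderiv_fun_mul hg hh]; simp; ring

lemma pd2_sum {ι} (s : Finset ι) (F : ι → ℝ×ℝ×ℝ → ℝ) {x}
    (hF : ∀ i ∈ s, DifferentiableAt ℝ (F i) x) :
    pd 2 (fun y => ∑ i ∈ s, F i y) x = ∑ i ∈ s, pd 2 (F i) x := by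
  unfold pd; rw [fderiv_fun_sum hF]; simp

lemma contDiffOn_pd2 {g} (hg : ContDiffOn ℝ (⊤ : ℕ∞) g Omega) : ContDiffOn ℝ (⊤ : ℕ∞) (pd 2 g) Omega := by
  exact (hg.fderiv_of_isOpen omega_open (by simp)).clm_apply contDiffOn_const

lemma diffAt_of_contDiffOn {g : ℝ×ℝ×ℝ → ℝ} {x} (hg : ContDiffOn ℝ (⊤ : ℕ∞) g Omega)
    (hx : x ∈ Omega) : DifferentiableAt ℝ g x :=
  (hg.contDiffAt (omega_open.mem_nhds hx)).differentiableAt (by simp)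

lemma contDiffOn_phicomp : ContDiffOn ℝ (⊤ : ℕ∞) (fun y : ℝ×ℝ×ℝ => phi y.2.2) Omega := by
  have : ContDiffOn ℝ (⊤ : ℕ∞) (fun y : ℝ×ℝ×ℝ => y.2.2 / (1 + y.2.2)) Omega := by
    apply ContDiffOn.div (by fun_prop) (by fun_prop)
    intro y hy
    have : (0:ℝ) < y.2.2 := hy
    positivity
  simpa [phi] using this

lemma hasDerivAt_phi {z : ℝ} (hz : 0 < z) : HasDerivAt phi (((1+z)⁻¹)^2) z := by
  have h1 : (1:ℝ)+z ≠ 0 := by positivity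
  have H0 := (hasDerivAt_id z).fun_div ((hasDerivAt_id z).const_add 1) h1
  simp only [id_eq] at H0
  have H : HasDerivAt (fun w : ℝ => w/(1+w)) (((1+z)⁻¹)^2) z := by
    refine H0.congr_deriv ?_
    rw [inv_pow]; ring
  exact H

def Tpoly (P : Polynomial ℝ) : Polynomial ℝ :=
  Polynomial.X^2 * P - Polynomial.X^2 * (1 - Polynomial.X) * Polynomial.derivative P

def Qp : ℕ → ℕ → Polynomial ℝ
  | 0, 0 => 1
  | 0, _+1 => 0
  | k+1, 0 => Tpoly (Qp k 0)
  | k+1, j+1 => Tpoly (Qp k (j+1)) + Qp k j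

lemma Tpoly_zero : Tpoly 0 = 0 := by simp [Tpoly]

lemma Qp_gt {k j : ℕ} (h : k < j) : Qp k j = 0 := by
  induction k generalizing j with
  | zero => match j, h with
    | j+1, _ => rfl
  | succ k IH => match j, h with
    | j+1, h =>
      have h1 : k < j + 1 := by omega
      have h2 : k < j := by omega
      show Tpoly (Qp k (j+1)) + Qp k j = 0
      rw [IH h1, IH h2, Tpoly_zero, add_zero]

lemma Qp_self (k : ℕ) : Qp k k = 1 := by
  induction k with
  | zero => rfl
  | succ k IH =>
    show Tpoly (Qp k (k+1)) + Qp k k = 1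
    rw [Qp_gt (Nat.lt_succ_self k), IH, Tpoly_zero, zero_add]

lemma Tpoly_eval (P : Polynomial ℝ) (u : ℝ) :
    (Tpoly P).eval u = u^2 * P.eval u - u^2 * (1-u) * (P.derivative.eval u) := by
  simp [Tpoly]

lemma hasDerivAt_inv1 {z : ℝ} (h1 : (1:ℝ)+z ≠ 0) :
    HasDerivAt (fun z : ℝ => (1+z)⁻¹) (-(((1+z)⁻¹)^2)) z := by
  have H0 := ((hasDerivAt_id z).const_add 1).fun_inv h1
  simp only [id_eq] at H0
  refine H0.congr_deriv ?_
  rw [inv_pow]; ring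

lemma hasDerivAt_cfun (P : Polynomial ℝ) {z : ℝ} (h1 : (1:ℝ)+z ≠ 0) :
    HasDerivAt (fun z : ℝ => P.eval (1+z)⁻¹)
      (P.derivative.eval (1+z)⁻¹ * (-(((1+z)⁻¹)^2))) z :=
  (P.hasDerivAt ((1+z)⁻¹)).comp (h₂ := fun u => P.eval u) z (hasDerivAt_inv1 h1)

lemma cfun_bound (P : Polynomial ℝ) : ∃ B : ℝ, ∀ z ∈ Ioi (0:ℝ), |P.eval (1+z)⁻¹| ≤ B := by
  obtain ⟨B, hB⟩ := isCompact_Icc.exists_bound_of_continuousOn (s := Icc (0:ℝ) 1)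
    (f := fun u : ℝ => P.eval u) (P.continuous.continuousOn)
  refine ⟨B, fun z hz => ?_⟩
  have hz' : (0:ℝ) < z := hz
  have h1 : (0:ℝ) < 1 + z := by linarith
  have : (1+z)⁻¹ ∈ Icc (0:ℝ) 1 := by
    constructor
    · positivity
    · rw [inv_le_one_iff₀]; right; linarith
  simpa [Real.norm_eq_abs] using hB _ this

lemma Z2_apply (g : ℝ×ℝ×ℝ → ℝ) (x) : Z 2 g x = phi x.2.2 * pd 2 g x := by simp [Z]

lemma Z2_eq (g : ℝ×ℝ×ℝ → ℝ) : Z 2 g = fun y => phi y.2.2 * pd 2 g y :=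
  funext fun y => Z2_apply g y

lemma contDiffOn_Z2 {g} (hg : ContDiffOn ℝ (⊤ : ℕ∞) g Omega) : ContDiffOn ℝ (⊤ : ℕ∞) (Z 2 g) Omega := by
  rw [Z2_eq]; exact contDiffOn_phicomp.mul (contDiffOn_pd2 hg)

lemma contDiffOn_Z2_iter {g} (hg : ContDiffOn ℝ (⊤ : ℕ∞) g Omega) :
    ∀ j, ContDiffOn ℝ (⊤ : ℕ∞) ((Z 2)^[j] g) Omega
  | 0 => hg
  | j+1 => by
    rw [Function.iterate_succ_apply']
    exact contDiffOn_Z2 (contDiffOn_Z2_iter hg j)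

lemma main_id (k : ℕ) (f : ℝ×ℝ×ℝ → ℝ) (hf : ContDiffOn ℝ (⊤ : ℕ∞) f Omega) :
    ∀ x ∈ Omega, pd 2 ((Z 2)^[k] f) x
      = ∑ j ∈ Finset.range (k+1),
          (Qp k j).eval (1+x.2.2)⁻¹ * (Z 2)^[j] (pd 2 f) x := by
  have hfz : ContDiffOn ℝ (⊤ : ℕ∞) (pd 2 f) Omega := contDiffOn_pd2 hf
  have hg : ∀ j, ContDiffOn ℝ (⊤ : ℕ∞) ((Z 2)^[j] (pd 2 f)) Omega :=
    fun j => contDiffOn_Z2_iter hfz j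
  induction k with
  | zero =>
    intro x hx
    simp only [Function.iterate_zero_apply, zero_add, Finset.sum_range_one,
      show Qp 0 0 = 1 from rfl, Polynomial.eval_one, one_mul]
  | succ k IH =>
    intro x hx
    have hz : (0:ℝ) < x.2.2 := hx
    have h1 : (0:ℝ) < 1 + x.2.2 := by linarith
    have h1' : (1:ℝ) + x.2.2 ≠ 0 := ne_of_gt h1
    have hGc : ContDiffOn ℝ (⊤ : ℕ∞) ((Z 2)^[k] f) Omega := contDiffOn_Z2_iter hf k
    have e1 : (Z 2)^[k+1] f = Z 2 ((Z 2)^[k] f) := Function.iterate_succ_apply' _ _ _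
    have dphi : DifferentiableAt ℝ (fun y : ℝ×ℝ×ℝ => phi y.2.2) x :=
      diffAt_of_contDiffOn contDiffOn_phicomp hx
    have dpdG : DifferentiableAt ℝ (pd 2 ((Z 2)^[k] f)) x :=
      diffAt_of_contDiffOn (contDiffOn_pd2 hGc) hx
    have e2 : pd 2 ((Z 2)^[k+1] f) x
        = ((1+x.2.2)⁻¹)^2 * pd 2 ((Z 2)^[k] f) x
          + phi x.2.2 * pd 2 (pd 2 ((Z 2)^[k] f)) x := by
      rw [e1, Z2_eq]
      rw [pd2_mul dphi dpdG]
      rw [pd2_comp_proj phi x (hasDerivAt_phi hz)]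
    have e3 : pd 2 (pd 2 ((Z 2)^[k] f)) x
        = pd 2 (fun y => ∑ j ∈ Finset.range (k+1),
            (Qp k j).eval (1+y.2.2)⁻¹ * (Z 2)^[j] (pd 2 f) y) x :=
      pd2_congr hx (fun y hy => IH y hy)
    have dcoef : ∀ j : ℕ, DifferentiableAt ℝ
        (fun y : ℝ×ℝ×ℝ => (Qp k j).eval (1+y.2.2)⁻¹) x :=
      fun j => (hasFDerivAt_comp_proj _ x (hasDerivAt_cfun (Qp k j) h1')).differentiableAt
    have dgj : ∀ j : ℕ, DifferentiableAt ℝ ((Z 2)^[j] (pd 2 f)) x :=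
      fun j => diffAt_of_contDiffOn (hg j) hx
    have e4 : pd 2 (fun y => ∑ j ∈ Finset.range (k+1),
            (Qp k j).eval (1+y.2.2)⁻¹ * (Z 2)^[j] (pd 2 f) y) x
        = ∑ j ∈ Finset.range (k+1),
            ((Qp k j).derivative.eval (1+x.2.2)⁻¹ * (-(((1+x.2.2)⁻¹)^2))
                * (Z 2)^[j] (pd 2 f) x
              + (Qp k j).eval (1+x.2.2)⁻¹ * pd 2 ((Z 2)^[j] (pd 2 f)) x) := by
      rw [pd2_sum (Finset.range (k+1)) (fun j y => (Qp k j).eval (1+y.2.2)⁻¹ * (Z 2)^[j] (pd 2 f) y) (fun j _ => (dcoef j).mul (dgj j))]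
      refine Finset.sum_congr rfl (fun j _ => ?_)
      rw [pd2_mul (dcoef j) (dgj j)]
      rw [pd2_comp_proj _ x (hasDerivAt_cfun (Qp k j) h1')]
    have e5 : ∀ j : ℕ, phi x.2.2 * pd 2 ((Z 2)^[j] (pd 2 f)) x
        = (Z 2)^[j+1] (pd 2 f) x := by
      intro j
      rw [Function.iterate_succ_apply', Z2_apply]
    have hphiz : phi x.2.2 = 1 - (1+x.2.2)⁻¹ := by
      unfold phi; field_simp; ring
    have key : ((1+x.2.2)⁻¹)^2 * (∑ j ∈ Finset.range (k+1),
            (Qp k j).eval (1+x.2.2)⁻¹ * (Z 2)^[j] (pd 2 f) x)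
        + phi x.2.2 * ∑ j ∈ Finset.range (k+1),
            ((Qp k j).derivative.eval (1+x.2.2)⁻¹ * (-(((1+x.2.2)⁻¹)^2))
                * (Z 2)^[j] (pd 2 f) x
              + (Qp k j).eval (1+x.2.2)⁻¹ * pd 2 ((Z 2)^[j] (pd 2 f)) x)
        = ∑ j ∈ Finset.range (k+1),
            ((Tpoly (Qp k j)).eval (1+x.2.2)⁻¹ * (Z 2)^[j] (pd 2 f) x
              + (Qp k j).eval (1+x.2.2)⁻¹ * (Z 2)^[j+1] (pd 2 f) x) := by
      rw [Finset.mul_sum, Finset.mul_sum, ← Finset.sum_add_distrib]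
      refine Finset.sum_congr rfl (fun j _ => ?_)
      rw [← e5 j, Tpoly_eval, hphiz]
      ring
    have hzero : (Tpoly (Qp k (k+1))).eval (1+x.2.2)⁻¹ * (Z 2)^[k+1] (pd 2 f) x = 0 := by
      rw [Qp_gt (Nat.lt_succ_self k), Tpoly_zero]; simp
    have rhs_eq : ∑ j ∈ Finset.range (k+2),
            (Qp (k+1) j).eval (1+x.2.2)⁻¹ * (Z 2)^[j] (pd 2 f) x
        = ∑ j ∈ Finset.range (k+1),
            ((Tpoly (Qp k j)).eval (1+x.2.2)⁻¹ * (Z 2)^[j] (pd 2 f) x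
              + (Qp k j).eval (1+x.2.2)⁻¹ * (Z 2)^[j+1] (pd 2 f) x) := by
      calc ∑ j ∈ Finset.range (k+2),
              (Qp (k+1) j).eval (1+x.2.2)⁻¹ * (Z 2)^[j] (pd 2 f) x
          = (∑ j ∈ Finset.range (k+1),
              (Qp (k+1) (j+1)).eval (1+x.2.2)⁻¹ * (Z 2)^[j+1] (pd 2 f) x)
              + (Qp (k+1) 0).eval (1+x.2.2)⁻¹ * (Z 2)^[0] (pd 2 f) x :=
            Finset.sum_range_succ' _ _
        _ = (∑ j ∈ Finset.range (k+1),
              ((Tpoly (Qp k (j+1))).eval (1+x.2.2)⁻¹ * (Z 2)^[j+1] (pd 2 f) x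
                + (Qp k j).eval (1+x.2.2)⁻¹ * (Z 2)^[j+1] (pd 2 f) x))
              + (Tpoly (Qp k 0)).eval (1+x.2.2)⁻¹ * (Z 2)^[0] (pd 2 f) x := by
            congr 1
            refine Finset.sum_congr rfl (fun j _ => ?_)
            show (Tpoly (Qp k (j+1)) + Qp k j).eval (1+x.2.2)⁻¹ * _ = _
            rw [Polynomial.eval_add]; ring
        _ = ((∑ j ∈ Finset.range (k+1),
              (Tpoly (Qp k (j+1))).eval (1+x.2.2)⁻¹ * (Z 2)^[j+1] (pd 2 f) x)
              + (Tpoly (Qp k 0)).eval (1+x.2.2)⁻¹ * (Z 2)^[0] (pd 2 f) x)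
            + ∑ j ∈ Finset.range (k+1),
              (Qp k j).eval (1+x.2.2)⁻¹ * (Z 2)^[j+1] (pd 2 f) x := by
            rw [Finset.sum_add_distrib]; ring
        _ = (∑ j ∈ Finset.range (k+2),
              (Tpoly (Qp k j)).eval (1+x.2.2)⁻¹ * (Z 2)^[j] (pd 2 f) x)
            + ∑ j ∈ Finset.range (k+1),
              (Qp k j).eval (1+x.2.2)⁻¹ * (Z 2)^[j+1] (pd 2 f) x := by
            rw [Finset.sum_range_succ'
              (fun j => (Tpoly (Qp k j)).eval (1+x.2.2)⁻¹ * (Z 2)^[j] (pd 2 f) x) (k+1)]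
        _ = (∑ j ∈ Finset.range (k+1),
              (Tpoly (Qp k j)).eval (1+x.2.2)⁻¹ * (Z 2)^[j] (pd 2 f) x)
            + ∑ j ∈ Finset.range (k+1),
              (Qp k j).eval (1+x.2.2)⁻¹ * (Z 2)^[j+1] (pd 2 f) x := by
            rw [Finset.sum_range_succ, hzero, add_zero]
        _ = ∑ j ∈ Finset.range (k+1),
              ((Tpoly (Qp k j)).eval (1+x.2.2)⁻¹ * (Z 2)^[j] (pd 2 f) x
                + (Qp k j).eval (1+x.2.2)⁻¹ * (Z 2)^[j+1] (pd 2 f) x) :=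
            (Finset.sum_add_distrib).symm
    rw [e2, e3, e4, IH x hx, key, rhs_eq]

/-- Lemma 2.2 (ii): `∂_z Z₃^k f = Σ_{j≤k} c̃^k_{j,φ} Z₃^j ∂_z f`,
with smooth bounded coefficients on `(0,∞)` and `c̃^k_{k,φ} ≡ 1`. -/
theorem conormal_commutator_ii (k : ℕ) :
    ∃ c : ℕ → ℝ → ℝ,
      (∀ j ≤ k, ContDiffOn ℝ (⊤ : ℕ∞) (c j) (Ioi 0) ∧ ∃ B : ℝ, ∀ z ∈ Ioi (0:ℝ), |c j z| ≤ B) ∧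
      (∀ z ∈ Ioi (0:ℝ), c k z = 1) ∧
      (∀ f : ℝ × ℝ × ℝ → ℝ, ContDiffOn ℝ (⊤ : ℕ∞) f Omega → ∀ x ∈ Omega,
        pd 2 ((Z 2)^[k] f) x
            = ∑ j ∈ Finset.range (k+1), c j x.2.2 * (Z 2)^[j] (pd 2 f) x ∧
        pd 2 ((Z 2)^[k] f) x
            = (Z 2)^[k] (pd 2 f) x
              + ∑ j ∈ Finset.range k, c j x.2.2 * (Z 2)^[j] (pd 2 f) x) := by
  refine ⟨fun j z => (Qp k j).eval (1+z)⁻¹, ?_, ?_, ?_⟩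
  · intro j hj
    constructor
    · intro z hz
      have hz' : (0:ℝ) < z := hz
      have h1 : (1:ℝ) + z ≠ 0 := by positivity
      have hinv : ContDiffAt ℝ (⊤ : ℕ∞) (fun z : ℝ => (1+z)⁻¹) z :=
        (contDiffAt_const.add contDiffAt_id).inv h1
      exact (((poly_contDiff (Qp k j)).contDiffAt).comp z hinv).contDiffWithinAt
    · exact cfun_bound (Qp k j)
  · intro z hz
    show (Qp k k).eval (1+z)⁻¹ = 1
    rw [Qp_self k]; simp
  · intro f hf x hx
    have h1 := main_id k f hf x hx
    refine ⟨h1, ?_⟩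
    rw [h1, Finset.sum_range_succ, Qp_self k, Polynomial.eval_one, one_mul, add_comm]
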